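/- Let E ⊆ G be a Borel subset of the Cantor dyadic group and 0 < s < 1. If there exists a nonzero finite nonatomic Borel measure μ supported on E such that Σ_{k=1}^∞ k^{s-1} (\hatμ(k))^2 < ∞, then the Hausdorff dimension of E (in the metric ρ) is at least s. -/

import Mathlib

/-!
The Walsh functions `w_k`, `k < 2 ^ n`, sum to `2 ^ n` on `G_n` and to `0` off it, so
`∫ μ (K_n x) dμ(x) = 2 ^ (-n) ∑_{k < 2 ^ n} μ̂(k) ^ 2`. Weighting by `2 ^ (s n)` and summing
over `n`, each `μ̂(k) ^ 2` picks up the geometric tail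
`∑_{2 ^ n > k} 2 ^ ((s - 1) n) ≲ k ^ (s - 1)`, so the cylinder energy
`∫ ∑_n 2 ^ (s n) μ (K_n x) dμ(x)` is finite. Restricting `μ` to a set of positive measure where
the integrand is bounded gives `ν (K_n x) ≲ 2 ^ (-s n)`; since a set of diameter `< 2 ^ (-n)`
lies in one `K_n x`, `ν (I) ≲ diam(I) ^ s`, and the mass distribution principle gives
`H^t(E) = ∞` for all `t < s`.
-/

open MeasureTheory Filter Topology
open scoped ENNReal Classical

/-- The Cantor dyadic group: sequences of 0s and 1s with coordinatewise addition mod 2. -/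
abbrev G : Type := ℕ → ZMod 2

/-- The metric ρ(x,y) = ∑_{i=1}^∞ 2^{-i} |x_i - y_i| (coordinates indexed from 0 here). -/
noncomputable def rho (x y : G) : ℝ :=
  ∑' i : ℕ, (2:ℝ) ^ (-(i:ℝ) - 1) * (if x i = y i then 0 else 1)

/-- The subgroup G_n of sequences vanishing in the first n coordinates. -/
def Gset (n : ℕ) : Set G := {x | ∀ i < n, x i = 0}

/-- The coset K_n(x) = x + G_n of G_n containing x. -/
def Kset (n : ℕ) (x : G) : Set G := {y | x - y ∈ Gset n}

/-- The k-th Walsh function. -/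
def walsh (k : ℕ) (x : G) : ℝ :=
  ∏ i ∈ Finset.range k, if k.testBit i ∧ x i = 1 then (-1 : ℝ) else 1

/-- The s-kernel: φ_s(0) = 0 and φ_s(x) = 2^{s(n-1)} for x ∈ G_{n-1} \ G_n,
i.e. 2^{s j} where j is the first nonzero coordinate of x. -/
noncomputable def kernel (s : ℝ) (x : G) : ℝ :=
  if h : ∃ i, x i ≠ 0 then (2:ℝ) ^ (s * (Nat.find h : ℝ)) else 0

/-- The truncated s-kernel φ_s^n. -/
noncomputable def kernelTrunc (s : ℝ) (n : ℕ) (x : G) : ℝ :=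
  if x = 0 then 0 else if x ∈ Gset n then (2:ℝ) ^ (s * (n:ℝ)) else kernel s x

/-- Walsh–Fourier coefficient of the s-kernel w.r.t. a (Haar) measure lam. -/
noncomputable def phiHat (s : ℝ) (lam : Measure G) (k : ℕ) : ℝ :=
  ∫ x, kernel s x * walsh k x ∂lam

/-- Walsh–Fourier coefficient of the truncated s-kernel. -/
noncomputable def phiHatTrunc (s : ℝ) (n : ℕ) (lam : Measure G) (k : ℕ) : ℝ :=
  ∫ x, kernelTrunc s n x * walsh k x ∂lam

/-- Walsh–Fourier coefficient of a measure μ. -/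
noncomputable def muHat (μ : Measure G) (k : ℕ) : ℝ :=
  ∫ x, walsh k x ∂μ

/-- s-potential of μ at x. -/
noncomputable def potential (s : ℝ) (μ : Measure G) (x : G) : ℝ≥0∞ :=
  ∫⁻ y, ENNReal.ofReal (kernel s (x - y)) ∂μ

/-- s-energy of μ. -/
noncomputable def energy (s : ℝ) (μ : Measure G) : ℝ≥0∞ :=
  ∫⁻ x, ∫⁻ y, ENNReal.ofReal (kernel s (x - y)) ∂μ ∂μ

/-- truncated s-energy of μ. -/
noncomputable def energyTrunc (s : ℝ) (n : ℕ) (μ : Measure G) : ℝ≥0∞ :=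
  ∫⁻ x, ∫⁻ y, ENNReal.ofReal (kernelTrunc s n (x - y)) ∂μ ∂μ

/-- Diameter of a set in the metric ρ, valued in ℝ≥0∞. -/
noncomputable def diamRho (I : Set G) : ℝ≥0∞ :=
  ⨆ x ∈ I, ⨆ y ∈ I, ENNReal.ofReal (rho x y)

/-- Pre-Hausdorff measure H^s_δ via countable covers of ρ-diameter < δ. -/
noncomputable def Hdelta (s : ℝ) (δ : ℝ≥0∞) (A : Set G) : ℝ≥0∞ :=
  ⨅ (I : ℕ → Set G) (_ : A ⊆ ⋃ i, I i) (_ : ∀ i, diamRho (I i) < δ),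
    ∑' i, diamRho (I i) ^ s

/-- s-dimensional Hausdorff measure w.r.t. the metric ρ. -/
noncomputable def Hmeas (s : ℝ) (A : Set G) : ℝ≥0∞ :=
  ⨆ (δ : ℝ≥0∞) (_ : 0 < δ), Hdelta s δ A

/-- Hausdorff dimension w.r.t. the metric ρ. -/
noncomputable def hdimRho (A : Set G) : ℝ≥0∞ :=
  ⨆ (t : ℝ) (_ : Hmeas t A = ⊤), ENNReal.ofReal t

theorem zmod_two_eq_zero_or_one : ∀ a : ZMod 2, a = 0 ∨ a = 1 := by decide

theorem walsh_sub (k : ℕ) (x y : G) : walsh k (x - y) = walsh k x * walsh k y := by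
  have factor_sub : ∀ (b : Bool) (a c : ZMod 2), (if b ∧ a - c = 1 then (-1 : ℝ) else 1) =
      (if b ∧ a = 1 then -1 else 1) * (if b ∧ c = 1 then -1 else 1) := by
    intro b a c
    cases b <;> rcases zmod_two_eq_zero_or_one a with rfl | rfl <;>
      rcases zmod_two_eq_zero_or_one c with rfl | rfl <;> simp +decide
  simp only [walsh, ← Finset.prod_mul_distrib, Pi.sub_apply, factor_sub]

theorem abs_walsh (k : ℕ) (x : G) : |walsh k x| = 1 := by
  rw [walsh, Finset.abs_prod]
  exact Finset.prod_eq_one fun i _ => by split_ifs <;> simp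

theorem measurable_walsh (k : ℕ) : Measurable (walsh k) :=
  Finset.measurable_prod _ fun i _ =>
    (measurable_of_countable fun a : ZMod 2 => if k.testBit i ∧ a = 1 then (-1 : ℝ) else 1).comp
      (measurable_pi_apply i)

theorem integrable_walsh (μ : Measure G) [IsFiniteMeasure μ] (k : ℕ) :
    Integrable (walsh k) μ :=
  .of_bound (measurable_walsh k).aestronglyMeasurable 1 (.of_forall fun x => (abs_walsh k x).le)

theorem walsh_eq_prod_range {k N : ℕ} (hk : k < 2 ^ N) (z : G) :
    walsh k z = ∏ i ∈ Finset.range N, if k.testBit i ∧ z i = 1 then (-1 : ℝ) else 1 := by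
  have extend : ∀ M, k < 2 ^ M → ∀ M' ≥ M,
      ∏ i ∈ Finset.range M, (if k.testBit i ∧ z i = 1 then (-1 : ℝ) else 1) =
        ∏ i ∈ Finset.range M', if k.testBit i ∧ z i = 1 then (-1 : ℝ) else 1 :=
    fun M hM M' hM' => Finset.prod_subset (Finset.range_subset_range.mpr hM') fun i _ hi => by
      have hki : k < 2 ^ i := hM.trans_le (Nat.pow_le_pow_right two_pos (by simpa using hi))
      simp [Nat.testBit_lt_two_pow hki]
  rw [walsh, extend k Nat.lt_two_pow_self _ (le_max_left k N), extend N hk _ (le_max_right k N)]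

theorem walsh_two_pow_add {n k : ℕ} (hk : k < 2 ^ n) (z : G) :
    walsh (2 ^ n + k) z = walsh k z * if z n = 1 then -1 else 1 := by
  rw [walsh_eq_prod_range (N := n + 1) (by omega), walsh_eq_prod_range hk,
    Finset.prod_range_succ, Nat.testBit_two_pow_add_eq, Nat.testBit_lt_two_pow hk]
  congr 1
  · exact Finset.prod_congr rfl fun i hi => by
      rw [Nat.testBit_two_pow_add_gt (Finset.mem_range.mp hi)]
  · simp

theorem sum_walsh_range_two_pow (n : ℕ) (z : G) :
    ∑ k ∈ Finset.range (2 ^ n), walsh k z = if z ∈ Gset n then 2 ^ n else 0 := by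
  induction n with
  | zero => simp [walsh, Gset]
  | succ n ih =>
    rw [pow_succ, mul_two, Finset.sum_range_add, Finset.sum_congr rfl fun k hk =>
      walsh_two_pow_add (Finset.mem_range.mp hk) z, ← Finset.sum_mul, ih]
    have mem_succ : z ∈ Gset (n + 1) ↔ z ∈ Gset n ∧ z n = 0 := by
      show (∀ i < n + 1, z i = 0) ↔ (∀ i < n, z i = 0) ∧ z n = 0
      simp only [Nat.lt_succ_iff_lt_or_eq, or_imp, forall_and, forall_eq]
    rcases zmod_two_eq_zero_or_one (z n) with h | h <;> by_cases hz : z ∈ Gset n <;>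
      simp [mem_succ, hz, h, pow_succ, mul_two]

theorem measurableSet_Gset (n : ℕ) : MeasurableSet (Gset n) := by
  simp only [Gset]
  measurability

theorem measurableSet_Kset (n : ℕ) (x : G) : MeasurableSet (Kset n x) :=
  (measurable_const.sub measurable_id) (measurableSet_Gset n)

theorem Kset_eq_of_mem {n : ℕ} {x w : G} (hw : w ∈ Kset n x) : Kset n w = Kset n x := by
  ext y
  have hxw : ∀ i < n, x i = w i := fun i hi => sub_eq_zero.1 (hw i hi)
  show (∀ i < n, w i - y i = 0) ↔ ∀ i < n, x i - y i = 0
  exact forall₂_congr fun i hi => by rw [hxw i hi]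

theorem eq_of_forall_mem_Kset {x y : G} (h : ∀ n, y ∈ Kset n x) : y = x :=
  funext fun i => (sub_eq_zero.1 (h (i + 1) i i.lt_succ_self)).symm

theorem indicator_Kset_eq_sum_walsh (n : ℕ) (x y : G) :
    (Kset n x).indicator 1 y =
      (2 ^ n)⁻¹ * ∑ k ∈ Finset.range (2 ^ n), walsh k x * walsh k y := by
  simp_rw [← walsh_sub, sum_walsh_range_two_pow]
  by_cases hy : x - y ∈ Gset n
  · simp [Set.indicator_of_mem (show y ∈ Kset n x from hy), hy]
  · simp [Set.indicator_of_notMem (show y ∉ Kset n x from hy), hy]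

theorem measure_Kset_toReal (μ : Measure G) [IsFiniteMeasure μ] (n : ℕ) (x : G) :
    (μ (Kset n x)).toReal =
      (2 ^ n)⁻¹ * ∑ k ∈ Finset.range (2 ^ n), walsh k x * muHat μ k := by
  rw [← measureReal_def, ← integral_indicator_one (measurableSet_Kset n x)]
  simp_rw [indicator_Kset_eq_sum_walsh, integral_const_mul, muHat]
  rw [integral_finsetSum _ fun k _ => (integrable_walsh μ k).const_mul _]
  simp_rw [integral_const_mul]

theorem measurable_measure_Kset (μ : Measure G) [SFinite μ] (n : ℕ) :
    Measurable fun x => μ (Kset n x) :=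
  measurable_measure_prodMk_left ((measurable_fst.sub measurable_snd) (measurableSet_Gset n))

theorem lintegral_measure_Kset (μ : Measure G) [IsFiniteMeasure μ] (n : ℕ) :
    ∫⁻ x, μ (Kset n x) ∂μ =
      2⁻¹ ^ n * ∑ k ∈ Finset.range (2 ^ n), ENNReal.ofReal (muHat μ k ^ 2) := by
  have hint : Integrable (fun x => (μ (Kset n x)).toReal) μ :=
    .of_bound (measurable_measure_Kset μ n).ennreal_toReal.aestronglyMeasurable
      (μ Set.univ).toReal (.of_forall fun x => by
        rw [Real.norm_of_nonneg ENNReal.toReal_nonneg]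
        exact ENNReal.toReal_mono (measure_ne_top μ _) (measure_mono (Set.subset_univ _)))
  have hreal : ∫ x, (μ (Kset n x)).toReal ∂μ =
      (2 ^ n)⁻¹ * ∑ k ∈ Finset.range (2 ^ n), muHat μ k ^ 2 := by
    simp_rw [measure_Kset_toReal, integral_const_mul]
    rw [integral_finsetSum _ fun k _ => (integrable_walsh μ k).mul_const _]
    simp_rw [integral_mul_const, sq, muHat]
  rw [← lintegral_congr fun x => ENNReal.ofReal_toReal (measure_ne_top μ (Kset n x)),
    ← ofReal_integral_eq_lintegral_ofReal hint (.of_forall fun x => ENNReal.toReal_nonneg),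
    hreal, ENNReal.ofReal_mul (by positivity),
    ENNReal.ofReal_sum_of_nonneg fun k _ => sq_nonneg _]
  simp [ENNReal.ofReal_inv_of_pos, ENNReal.ofReal_pow, ENNReal.inv_pow]

theorem ENNReal.tsum_ite_le_pow (r : ℝ≥0∞) (m : ℕ) :
    ∑' j : ℕ, (if m ≤ j then r ^ j else 0) = r ^ m * (1 - r)⁻¹ := by
  rw [← ENNReal.summable.sum_add_tsum_nat_add',
    Finset.sum_eq_zero fun j hj => if_neg (by simpa using hj), zero_add,
    ← ENNReal.tsum_geometric, ← ENNReal.tsum_mul_left]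
  simp [pow_add, mul_comm]

theorem ENNReal.tsum_pow_mul_sum_range_two_pow (r : ℝ≥0∞) (a : ℕ → ℝ≥0∞) :
    ∑' j : ℕ, r ^ j * ∑ k ∈ Finset.range (2 ^ j), a k =
      (1 - r)⁻¹ * ∑' k : ℕ, r ^ Nat.size k * a k :=
  calc ∑' j : ℕ, r ^ j * ∑ k ∈ Finset.range (2 ^ j), a k
      = ∑' (j : ℕ) (k : ℕ), if Nat.size k ≤ j then r ^ j * a k else 0 := by
        refine tsum_congr fun j => ?_
        rw [Finset.mul_sum, sum_eq_tsum_indicator]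
        refine tsum_congr fun k => ?_
        by_cases hk : k < 2 ^ j <;> simp [Set.indicator, hk, Nat.size_le]
    _ = ∑' k : ℕ, (∑' j : ℕ, if Nat.size k ≤ j then r ^ j else 0) * a k := by
        rw [ENNReal.tsum_comm]
        simp_rw [← ENNReal.tsum_mul_right, ite_mul, zero_mul]
    _ = (1 - r)⁻¹ * ∑' k : ℕ, r ^ Nat.size k * a k := by
        simp_rw [ENNReal.tsum_ite_le_pow, ← ENNReal.tsum_mul_left]
        exact tsum_congr fun k => by ring

/-- Comparable to the `s`-potential `∫ kernel s (x - y) dμ(y)`, since `kernel s` equals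
`2 ^ (s j)` on `Gset j \ Gset (j + 1)`. -/
noncomputable def cylinderPotential (s : ℝ) (μ : Measure G) (x : G) : ℝ≥0∞ :=
  ∑' j : ℕ, ((2 : ℝ≥0∞) ^ j) ^ s * μ (Kset j x)

theorem measurable_cylinderPotential (s : ℝ) (μ : Measure G) [SFinite μ] :
    Measurable (cylinderPotential s μ) :=
  Measurable.tsum fun j => (measurable_measure_Kset μ j).const_mul _

theorem lintegral_cylinderPotential (s : ℝ) (μ : Measure G) [IsFiniteMeasure μ] :
    ∫⁻ x, cylinderPotential s μ x ∂μ = (1 - 2 ^ (s - 1))⁻¹ *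
      ∑' k : ℕ, (2 ^ (s - 1)) ^ Nat.size k * ENNReal.ofReal (muHat μ k ^ 2) := by
  have weight : ∀ j : ℕ, ((2 : ℝ≥0∞) ^ j) ^ s * 2⁻¹ ^ j = (2 ^ (s - 1)) ^ j := fun j => by
    rw [← ENNReal.rpow_natCast_mul, mul_comm (j : ℝ), ENNReal.rpow_mul_natCast, ← mul_pow,
      ENNReal.rpow_sub _ _ two_ne_zero ENNReal.ofNat_ne_top, ENNReal.rpow_one, div_eq_mul_inv]
  simp only [cylinderPotential]
  rw [lintegral_tsum fun j => ((measurable_measure_Kset μ j).const_mul _).aemeasurable,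
    ← ENNReal.tsum_pow_mul_sum_range_two_pow]
  refine tsum_congr fun j => ?_
  rw [lintegral_const_mul _ (measurable_measure_Kset μ j), lintegral_measure_Kset, ← mul_assoc,
    weight]

theorem two_rpow_pow_size_le {s : ℝ} (hs1 : s ≤ 1) {k : ℕ} (hk : k ≠ 0) :
    ((2 : ℝ≥0∞) ^ (s - 1)) ^ Nat.size k ≤ ENNReal.ofReal ((k : ℝ) ^ (s - 1)) := by
  rw [← ENNReal.ofReal_ofNat, ENNReal.ofReal_rpow_of_pos two_pos,
    ← ENNReal.ofReal_pow (by positivity)]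
  refine ENNReal.ofReal_le_ofReal ?_
  rw [← Real.rpow_mul_natCast zero_le_two, mul_comm, Real.rpow_natCast_mul zero_le_two]
  exact Real.rpow_le_rpow_of_nonpos (by positivity) (by exact_mod_cast (Nat.lt_size_self k).le)
    (by linarith)

theorem lintegral_cylinderPotential_lt_top {s : ℝ} (hs1 : s < 1) (μ : Measure G)
    [IsFiniteMeasure μ] (hsum : Summable fun k : ℕ => (k : ℝ) ^ (s - 1) * muHat μ k ^ 2) :
    ∫⁻ x, cylinderPotential s μ x ∂μ < ⊤ := by
  rw [lintegral_cylinderPotential]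
  refine ENNReal.mul_lt_top ?_ ?_
  · refine ENNReal.inv_lt_top.2 (tsub_pos_iff_lt.2 ?_)
    exact ENNReal.rpow_lt_one_of_one_lt_of_neg ENNReal.one_lt_two (by linarith)
  rw [tsum_eq_zero_add' ENNReal.summable]
  refine ENNReal.add_lt_top.2 ⟨by simp, ?_⟩
  have hsum' := hsum.comp_injective (add_left_injective 1)
  calc ∑' k : ℕ, ((2 : ℝ≥0∞) ^ (s - 1)) ^ Nat.size (k + 1) *
        ENNReal.ofReal (muHat μ (k + 1) ^ 2)
      ≤ ∑' k : ℕ, ENNReal.ofReal (((k + 1 : ℕ) : ℝ) ^ (s - 1) * muHat μ (k + 1) ^ 2) :=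
        ENNReal.tsum_le_tsum fun k => by
          rw [ENNReal.ofReal_mul (by positivity)]
          gcongr
          exact two_rpow_pow_size_le hs1.le k.succ_ne_zero
    _ = ENNReal.ofReal (∑' k : ℕ, ((k + 1 : ℕ) : ℝ) ^ (s - 1) * muHat μ (k + 1) ^ 2) :=
        (ENNReal.ofReal_tsum_of_nonneg
          (fun k => mul_nonneg (by positivity) (sq_nonneg _)) hsum').symm
    _ < ⊤ := ENNReal.ofReal_lt_top

theorem rpow_mul_measure_Kset_le_cylinderPotential (s : ℝ) (μ : Measure G) {n : ℕ} {x w : G}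
    (hw : w ∈ Kset n x) : ((2 : ℝ≥0∞) ^ n) ^ s * μ (Kset n x) ≤ cylinderPotential s μ w := by
  rw [← Kset_eq_of_mem hw]
  exact ENNReal.le_tsum (f := fun j => ((2 : ℝ≥0∞) ^ j) ^ s * μ (Kset j w)) n

theorem exists_measure_setOf_le_natCast_ne_zero {α : Type*} [MeasurableSpace α]
    {μ : Measure α} (hμ : μ ≠ 0) {f : α → ℝ≥0∞} (hf : ∀ᵐ x ∂μ, f x < ⊤) :
    ∃ m : ℕ, μ {x | f x ≤ m} ≠ 0 := by
  by_contra! hnull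
  have hcover : ∀ᵐ x ∂μ, x ∈ ⋃ m : ℕ, {x | f x ≤ m} := hf.mono fun x hx =>
    Set.mem_iUnion.2 ((ENNReal.exists_nat_gt hx.ne).imp fun _ => le_of_lt)
  have hnot : ∀ᵐ x ∂μ, x ∉ ⋃ m : ℕ, {x | f x ≤ m} :=
    measure_eq_zero_iff_ae_notMem.1 (measure_iUnion_null hnull)
  exact hμ (ae_eq_bot.1 (eventually_false_iff_eq_bot.1
    ((hcover.and hnot).mono fun x h => h.2 h.1)))

theorem exists_restrict_measure_Kset_le {s : ℝ} {μ : Measure G} [SFinite μ] (hμ : μ ≠ 0)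
    (henergy : ∫⁻ x, cylinderPotential s μ x ∂μ < ⊤) :
    ∃ F, MeasurableSet F ∧ μ F ≠ 0 ∧ ∃ M ≠ ⊤,
      ∀ n x, ((2 : ℝ≥0∞) ^ n) ^ s * μ.restrict F (Kset n x) ≤ M := by
  have hP := measurable_cylinderPotential s μ
  obtain ⟨m, hm⟩ := exists_measure_setOf_le_natCast_ne_zero hμ (ae_lt_top hP henergy.ne)
  set F := {x | cylinderPotential s μ x ≤ m}
  refine ⟨F, measurableSet_le hP measurable_const, hm, m, ENNReal.natCast_ne_top m,
    fun n x => ?_⟩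
  rw [Measure.restrict_apply (measurableSet_Kset n x)]
  rcases (Kset n x ∩ F).eq_empty_or_nonempty with h | ⟨w, hwK, hwF⟩
  · simp [h]
  · calc ((2 : ℝ≥0∞) ^ n) ^ s * μ (Kset n x ∩ F)
        ≤ ((2 : ℝ≥0∞) ^ n) ^ s * μ (Kset n x) := by gcongr; exact Set.inter_subset_left
      _ ≤ m := (rpow_mul_measure_Kset_le_cylinderPotential s μ hwK).trans hwF

theorem rho_summand_nonneg (x y : G) (i : ℕ) :
    0 ≤ (2 : ℝ) ^ (-(i : ℝ) - 1) * (if x i = y i then 0 else 1) :=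
  mul_nonneg (Real.rpow_nonneg zero_le_two _) (by split_ifs <;> norm_num)

theorem two_rpow_neg_natCast_sub_one (i : ℕ) : (2 : ℝ) ^ (-(i : ℝ) - 1) = 2⁻¹ ^ (i + 1) := by
  rw [show -(i : ℝ) - 1 = -((i + 1 : ℕ) : ℝ) by push_cast; ring, Real.rpow_neg zero_le_two,
    Real.rpow_natCast, inv_pow]

theorem inv_two_pow_succ_le_rho {x y : G} {i : ℕ} (h : x i ≠ y i) :
    2⁻¹ ^ (i + 1) ≤ rho x y := by
  have hsum : Summable fun j : ℕ => (2 : ℝ) ^ (-(j : ℝ) - 1) * (if x j = y j then 0 else 1) :=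
    .of_nonneg_of_le (rho_summand_nonneg x y) (fun j => by
      rw [two_rpow_neg_natCast_sub_one]
      split_ifs <;> norm_num [pow_succ])
      (summable_geometric_of_lt_one (by norm_num) (by norm_num : (2 : ℝ)⁻¹ < 1))
  have := hsum.le_tsum i fun j _ => rho_summand_nonneg x y j
  rwa [if_neg h, mul_one, two_rpow_neg_natCast_sub_one] at this

theorem apply_eq_of_ofReal_rho_lt {x y : G} {n : ℕ} (h : ENNReal.ofReal (rho x y) < 2⁻¹ ^ n)
    {i : ℕ} (hi : i < n) : x i = y i := by
  by_contra hne
  rw [← ENNReal.ofReal_ofNat, ← ENNReal.ofReal_inv_of_pos two_pos,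
    ← ENNReal.ofReal_pow (by norm_num), ENNReal.ofReal_lt_ofReal_iff (by positivity)] at h
  exact (inv_two_pow_succ_le_rho hne).not_gt
    (h.trans_le (pow_le_pow_of_le_one (by norm_num) (by norm_num) hi))

theorem ofReal_rho_le_diamRho {I : Set G} {x y : G} (hx : x ∈ I) (hy : y ∈ I) :
    ENNReal.ofReal (rho x y) ≤ diamRho I :=
  le_iSup₂_of_le x hx (le_iSup₂_of_le y hy le_rfl)

theorem subset_Kset_of_diamRho_lt {I : Set G} {x : G} (hx : x ∈ I) {n : ℕ}
    (h : diamRho I < 2⁻¹ ^ n) : I ⊆ Kset n x := fun _ hy _ hi =>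
  sub_eq_zero.2 (apply_eq_of_ofReal_rho_lt ((ofReal_rho_le_diamRho hx hy).trans_lt h) hi)

theorem ENNReal.exists_inv_two_pow_succ_le_lt {a : ℝ≥0∞} (h0 : a ≠ 0) (h1 : a < 1) :
    ∃ n : ℕ, 2⁻¹ ^ (n + 1) ≤ a ∧ a < 2⁻¹ ^ n := by
  have hex : ∃ n : ℕ, 2⁻¹ ^ n ≤ a := (ENNReal.exists_inv_two_pow_lt h0).imp fun _ => le_of_lt
  obtain ⟨n, hn⟩ : ∃ n, Nat.find hex = n + 1 := Nat.exists_eq_succ_of_ne_zero fun h => by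
    have := Nat.find_spec hex
    rw [h, pow_zero] at this
    exact h1.not_ge this
  exact ⟨n, hn ▸ Nat.find_spec hex, not_le.1 (Nat.find_min hex (by omega))⟩

theorem measure_le_mul_diamRho_rpow {ν : Measure G} (hna : ∀ x, ν {x} = 0) {s : ℝ}
    (hs : 0 ≤ s) {M : ℝ≥0∞} (hM : ∀ n x, ((2 : ℝ≥0∞) ^ n) ^ s * ν (Kset n x) ≤ M)
    {I : Set G} (hI : diamRho I < 1) : ν I ≤ M * 2 ^ s * diamRho I ^ s := by
  rcases I.eq_empty_or_nonempty with rfl | ⟨x, hx⟩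
  · simp
  by_cases h0 : diamRho I = 0
  · have hsub : I ⊆ {x} := fun y hy => eq_of_forall_mem_Kset fun n =>
      subset_Kset_of_diamRho_lt hx (h0 ▸ ENNReal.pow_pos (by simp) n) hy
    simp [measure_mono_null hsub (hna x)]
  obtain ⟨n, hn_le, hn_lt⟩ := ENNReal.exists_inv_two_pow_succ_le_lt h0 hI
  have hunit : ((2 : ℝ≥0∞) ^ n) ^ s * 2 ^ s * (2⁻¹ ^ (n + 1)) ^ s = 1 := by
    rw [← ENNReal.mul_rpow_of_nonneg _ _ hs, ← ENNReal.mul_rpow_of_nonneg _ _ hs, ← pow_succ,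
      ← mul_pow, ENNReal.mul_inv_cancel two_ne_zero ENNReal.ofNat_ne_top, one_pow,
      ENNReal.one_rpow]
  calc ν I ≤ ν (Kset n x) := measure_mono (subset_Kset_of_diamRho_lt hx hn_lt)
    _ = ν (Kset n x) * (((2 : ℝ≥0∞) ^ n) ^ s * 2 ^ s * (2⁻¹ ^ (n + 1)) ^ s) := by
        rw [hunit, mul_one]
    _ = ((2 : ℝ≥0∞) ^ n) ^ s * ν (Kset n x) * 2 ^ s * (2⁻¹ ^ (n + 1)) ^ s := by ring
    _ ≤ M * 2 ^ s * diamRho I ^ s := by gcongr; exact hM n x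

theorem measure_le_mul_Hdelta {ν : Measure G} {c : ℝ≥0∞} (hc0 : c ≠ 0) (hc : c ≠ ⊤) {t : ℝ}
    {δ : ℝ≥0∞} (h : ∀ I, diamRho I < δ → ν I ≤ c * diamRho I ^ t) (E : Set G) :
    ν E ≤ c * Hdelta t δ E := by
  simp_rw [Hdelta, ENNReal.mul_iInf_of_ne hc0 hc]
  refine le_iInf₂ fun I hcov => le_iInf fun hsmall => ?_
  calc ν E ≤ ν (⋃ i, I i) := measure_mono hcov
    _ ≤ ∑' i, ν (I i) := measure_iUnion_le I
    _ ≤ ∑' i, c * diamRho (I i) ^ t := ENNReal.tsum_le_tsum fun i => h _ (hsmall i)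
    _ = c * ∑' i, diamRho (I i) ^ t := ENNReal.tsum_mul_left

theorem ENNReal.rpow_le_rpow_sub_mul_rpow {d δ : ℝ≥0∞} (hd : d ≤ δ) {s t : ℝ} (ht : 0 ≤ t)
    (hts : t ≤ s) : d ^ s ≤ δ ^ (s - t) * d ^ t := by
  calc d ^ s = d ^ (s - t) * d ^ t := by
        rw [← ENNReal.rpow_add_of_nonneg _ _ (by linarith) ht, sub_add_cancel]
    _ ≤ δ ^ (s - t) * d ^ t := by gcongr

theorem Hmeas_eq_top_of_measure_le {ν : Measure G} {E : Set G} (hνE : ν E ≠ 0) {C : ℝ≥0∞}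
    (hC : C ≠ ⊤) {s t : ℝ} (ht : 0 ≤ t) (hts : t < s)
    (h : ∀ I, diamRho I < 1 → ν I ≤ C * diamRho I ^ s) : Hmeas t E = ⊤ := by
  by_contra hH
  -- `C + 1` rather than `C`: `measure_le_mul_Hdelta` needs a nonzero constant.
  set C' := C + 1
  have hC'0 : C' ≠ 0 := by simp [C']
  have hC' : C' ≠ ⊤ := by simp [C', hC]
  set q : ℝ≥0∞ := 2⁻¹ ^ (s - t)
  have hq0 : q ≠ 0 := (ENNReal.rpow_pos (by simp) (by simp)).ne'
  have hq : q ≠ ⊤ := ENNReal.rpow_ne_top_of_nonneg (by linarith) (by simp)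
  have hbound : ∀ m : ℕ, ν E ≤ C' * q ^ m * Hmeas t E := by
    intro m
    have hsmall : ∀ I, diamRho I < 2⁻¹ ^ m → ν I ≤ C' * q ^ m * diamRho I ^ t := by
      intro I hI
      calc ν I ≤ C * diamRho I ^ s := h I (hI.trans_le (pow_le_one₀ zero_le (by norm_num)))
        _ ≤ C' * ((2⁻¹ ^ m) ^ (s - t) * diamRho I ^ t) :=
            mul_le_mul' le_self_add (ENNReal.rpow_le_rpow_sub_mul_rpow hI.le ht hts.le)
        _ = C' * q ^ m * diamRho I ^ t := by
            rw [← ENNReal.rpow_natCast_mul, mul_comm (m : ℝ), ENNReal.rpow_mul_natCast,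
              mul_assoc]
    calc ν E ≤ C' * q ^ m * Hdelta t (2⁻¹ ^ m) E :=
          measure_le_mul_Hdelta (mul_ne_zero hC'0 (pow_ne_zero _ hq0))
            (ENNReal.mul_ne_top hC' (ENNReal.pow_ne_top hq)) hsmall E
      _ ≤ C' * q ^ m * Hmeas t E := by
          gcongr
          exact le_iSup₂_of_le (2⁻¹ ^ m) (ENNReal.pow_pos (by simp) m) le_rfl
  have htend : Tendsto (fun m : ℕ => C' * q ^ m * Hmeas t E) atTop (𝓝 0) := by
    have hq1 : q < 1 := ENNReal.rpow_lt_one (by norm_num) (by linarith)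
    simpa using ENNReal.Tendsto.mul_const (ENNReal.Tendsto.const_mul
      (ENNReal.tendsto_pow_atTop_nhds_zero_of_lt_one hq1) (Or.inr hC')) (Or.inr hH)
  exact hνE (le_antisymm (ge_of_tendsto' htend hbound) zero_le)

theorem le_hdimRho_of_forall_Hmeas_eq_top {E : Set G} {s : ℝ}
    (h : ∀ t, 0 ≤ t → t < s → Hmeas t E = ⊤) : ENNReal.ofReal s ≤ hdimRho E := by
  refine le_of_forall_lt_imp_le_of_dense fun c hc => ?_
  rw [← ENNReal.ofReal_toReal (ne_top_of_lt hc)]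
  exact le_iSup₂_of_le c.toReal
    (h _ ENNReal.toReal_nonneg (ENNReal.toReal_lt_of_lt_ofReal hc)) le_rfl

theorem stmt19_general (s : ℝ) (hs : 0 < s) (hs1 : s < 1) (E : Set G)
    (μ : Measure G) [IsFiniteMeasure μ] (hμ0 : μ ≠ 0) (hna : ∀ x : G, μ {x} = 0)
    (hsupp : μ Eᶜ = 0)
    (hsum : Summable (fun k : ℕ => (k:ℝ) ^ (s - 1) * (muHat μ k) ^ 2)) :
    ENNReal.ofReal s ≤ hdimRho E := by
  obtain ⟨F, hF, hμF, M, hM, hfrostman⟩ :=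
    exists_restrict_measure_Kset_le hμ0 (lintegral_cylinderPotential_lt_top hs1 μ hsum)
  have hνE : μ.restrict F E ≠ 0 := by
    rwa [Measure.restrict_apply' hF, Set.inter_comm, measure_inter_conull hsupp]
  have hν_atom : ∀ x, μ.restrict F {x} = 0 := fun x =>
    le_antisymm ((Measure.restrict_apply_le F {x}).trans (hna x).le) zero_le
  exact le_hdimRho_of_forall_Hmeas_eq_top fun t ht hts =>
    Hmeas_eq_top_of_measure_le hνE (ENNReal.mul_ne_top hM (by simp)) ht hts
      fun I hI => measure_le_mul_diamRho_rpow hν_atom hs.le hfrostman hI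

/-- If a nonzero finite nonatomic measure on E satisfies Σ_{k≥1} k^{s-1}(\hatμ(k))² < ∞,
then the Hausdorff dimension of E is at least s. -/
theorem stmt19 (s : ℝ) (hs : 0 < s) (hs1 : s < 1) (E : Set G) (hE : MeasurableSet E)
    (μ : Measure G) [IsFiniteMeasure μ] (hμ0 : μ ≠ 0) (hna : ∀ x : G, μ {x} = 0)
    (hsupp : μ Eᶜ = 0)
    (hsum : Summable (fun k : ℕ => (k:ℝ) ^ (s - 1) * (muHat μ k) ^ 2)) :
    ENNReal.ofReal s ≤ hdimRho E :=
  stmt19_general s hs hs1 E μ hμ0 hna hsupp hsum
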